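/- Let ν > 0 and let T > 0 satisfy 1/T ≥ 2ν. If f, g : ℝ → ℂ are continuous and integrable, the Fourier transforms ℱf and ℱg are supported in the interval [−ν, ν], and f(nT) = g(nT) for every integer n, then f = g. In other words, a band-limited signal containing no frequency components above ν is uniquely determined by its samples taken at any rate ν̂ = 1/T with ν̂ ≥ 2ν. -/

import Mathlib

open MeasureTheory Real
open scoped FourierTransform

lemma nyquist_aux_fourier_sub (f g : ℝ → ℂ) (hfi : Integrable f) (hgi : Integrable g)
    (w : ℝ) : 𝓕 (f - g) w = 𝓕 f w - 𝓕 g w := by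
  simp only [Real.fourier_eq, Pi.sub_apply, smul_sub]
  exact integral_sub ((Real.fourierIntegral_convergent_iff w).2 hfi)
    ((Real.fourierIntegral_convergent_iff w).2 hgi)

lemma nyquist_aux_inv_zero : (𝓕⁻ (0 : ℝ → ℂ)) = 0 := by
  funext w
  simp [Real.fourierInv_eq]

/-- **Nyquist–Shannon sampling theorem.** If `f g : ℝ → ℂ` are continuous and
integrable, their Fourier transforms are supported in `[-ν, ν]`, and the two
functions agree on the sample grid `{n * T : n ∈ ℤ}` where the sampling rate
`1/T` is at least `2ν`, then `f = g`. -/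
theorem nyquist_shannon_sampling
    (ν T : ℝ) (hν : 0 < ν) (hT : 0 < T) (hrate : 1 / T ≥ 2 * ν)
    (f g : ℝ → ℂ)
    (hfc : Continuous f) (hgc : Continuous g)
    (hfi : Integrable f) (hgi : Integrable g)
    (hfsupp : tsupport (𝓕 f) ⊆ Set.Icc (-ν) ν)
    (hgsupp : tsupport (𝓕 g) ⊆ Set.Icc (-ν) ν)
    (hsamples : ∀ n : ℤ, f (n * T) = g (n * T)) :
    f = g := by
  set h : ℝ → ℂ := f - g with hh
  have hhc : Continuous h := hfc.sub hgc
  have hhi : Integrable h := hfi.sub hgi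
  have hFsub : ∀ w, 𝓕 h w = 𝓕 f w - 𝓕 g w := nyquist_aux_fourier_sub f g hfi hgi
  -- support of `𝓕 h`
  have hsupp : tsupport (𝓕 h) ⊆ Set.Icc (-ν) ν := by
    have h1 : Function.support (𝓕 h) ⊆
        Function.support (𝓕 f) ∪ Function.support (𝓕 g) := by
      intro w hw
      by_contra hcon
      simp only [Set.mem_union, Function.mem_support, not_or, not_not] at hcon
      apply hw
      rw [hFsub, hcon.1, hcon.2, sub_zero]
    calc tsupport (𝓕 h) ⊆ closure (Function.support (𝓕 f) ∪ Function.support (𝓕 g)) :=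
          closure_mono h1
      _ = tsupport (𝓕 f) ∪ tsupport (𝓕 g) := closure_union
      _ ⊆ Set.Icc (-ν) ν := Set.union_subset hfsupp hgsupp
  have hout : ∀ y : ℝ, ν < |y| → 𝓕 h y = 0 := by
    intro y hy
    apply image_eq_zero_of_notMem_tsupport
    intro hmem
    have h2 := hsupp hmem
    rw [Set.mem_Icc, ← abs_le] at h2
    exact absurd h2 (not_le.mpr hy)
  have hFc : Continuous (𝓕 h) :=
    VectorFourier.fourierIntegral_continuous Real.continuous_fourierChar
      (by exact continuous_inner) hhi
  have hFcs : HasCompactSupport (𝓕 h) :=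
    IsCompact.of_isClosed_subset isCompact_Icc (isClosed_tsupport _) hsupp
  have hFi : Integrable (𝓕 h) := hFc.integrable_of_hasCompactSupport hFcs
  have hinv : 𝓕⁻ (𝓕 h) = h := hhc.fourierInv_fourier_eq hhi hFi
  have hsamp0 : ∀ k : ℤ, h (k * T) = 0 := by
    intro k
    simp only [hh, Pi.sub_apply, hsamples k, sub_self]
  -- the rescaled Fourier transform
  set F0 : ℝ → ℂ := fun x => 𝓕 h (x / T) with hF0
  have hF0c : Continuous F0 := hFc.comp (continuous_id.div_const T)
  -- `𝓕 F0` vanishes at all integers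
  have key : ∀ k : ℤ, 𝓕 F0 (k : ℝ) = 0 := by
    intro k
    have h1 : 𝓕 F0 (k : ℝ) =
        ∫ x : ℝ, Complex.exp ((-2 * π * x * (k : ℝ) : ℝ) * Complex.I) • F0 x :=
      Real.fourier_real_eq_integral_exp_smul _ _
    set G : ℝ → ℂ := fun u => Complex.exp ((-2 * π * u * (T * (k : ℝ)) : ℝ) * Complex.I) • 𝓕 h u
      with hG
    have h2 : ∀ x : ℝ,
        Complex.exp ((-2 * π * x * (k : ℝ) : ℝ) * Complex.I) • F0 x = G (x / T) := by
      intro x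
      have harg : -2 * π * (x / T) * (T * (k : ℝ)) = -2 * π * x * (k : ℝ) := by
        field_simp
      simp only [hG, hF0, harg]
    have h3 : ∫ u : ℝ, G u = 𝓕 (𝓕 h) (T * (k : ℝ)) :=
      (Real.fourier_real_eq_integral_exp_smul (𝓕 h) (T * (k : ℝ))).symm
    have h4 : 𝓕 (𝓕 h) (T * (k : ℝ)) = h (-(T * (k : ℝ))) := by
      have h5 := Real.fourierInv_eq_fourier_neg (𝓕 h) (-(T * (k : ℝ)))
      rw [neg_neg] at h5
      rw [← h5, hinv]
    have h5 : h (-(T * (k : ℝ))) = 0 := by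
      have h6 := hsamp0 (-k)
      rw [show ((-k : ℤ) : ℝ) * T = -(T * (k : ℝ)) by push_cast; ring] at h6
      exact h6
    rw [h1, MeasureTheory.integral_congr_ae (Filter.Eventually.of_forall h2),
      MeasureTheory.Measure.integral_comp_div G T, h3, h4, h5, smul_zero]
  -- Poisson summation hypotheses
  have h_norm : ∀ K : TopologicalSpace.Compacts ℝ,
      Summable fun n : ℤ =>
        ‖((ContinuousMap.mk F0 hF0c).comp (ContinuousMap.addRight (n : ℝ))).restrict K‖ := by
    intro K
    obtain ⟨r, hr0, hr⟩ : ∃ r : ℝ, 0 ≤ r ∧ (K : Set ℝ) ⊆ Metric.closedBall 0 r := by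
      obtain ⟨r, hr⟩ := K.isCompact.isBounded.subset_closedBall 0
      exact ⟨max r 0, le_max_right _ _, hr.trans (Metric.closedBall_subset_closedBall
        (le_max_left _ _))⟩
    apply summable_of_ne_finset_zero (s := Finset.Icc (-(⌈r⌉ + 1)) (⌈r⌉ + 1))
    intro n hn
    have hnr : r + 1 ≤ |(n : ℝ)| := by
      have h1 : (⌈r⌉ + 1 : ℤ) ≤ |n| := by
        rw [Finset.mem_Icc] at hn
        have hc0 : (0 : ℤ) ≤ ⌈r⌉ := Int.ceil_nonneg hr0
        rcases abs_cases n with ⟨ha1, ha2⟩ | ⟨ha1, ha2⟩ <;> omega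
      calc r + 1 ≤ (⌈r⌉ : ℝ) + 1 := by linarith [Int.le_ceil r]
        _ ≤ ((|n| : ℤ) : ℝ) := by exact_mod_cast h1
        _ = |(n : ℝ)| := by push_cast; rfl
    rw [norm_eq_zero]
    ext x
    obtain ⟨x, hx⟩ := x
    have hxr : |x| ≤ r := by
      have h2 := hr hx
      simpa [Real.norm_eq_abs] using Metric.mem_closedBall.mp h2
    simp only [ContinuousMap.restrict_apply, ContinuousMap.comp_apply,
      ContinuousMap.coe_addRight, ContinuousMap.coe_mk, ContinuousMap.zero_apply, hF0]
    apply hout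
    have habs : 1 ≤ |x + (n : ℝ)| := by
      have h3 : |(n : ℝ)| - |x| ≤ |x + (n : ℝ)| := by
        calc |(n : ℝ)| - |x| = |(x + (n : ℝ)) + (-x)| - |(-x)| := by
              rw [abs_neg]; congr 2; ring
          _ ≤ |x + (n : ℝ)| := by
              have := abs_add_le (x + (n : ℝ)) (-x)
              linarith
      linarith
    rw [abs_div, abs_of_pos hT, lt_div_iff₀ hT]
    calc ν * T < 2 * ν * T := by nlinarith
      _ ≤ (1 / T) * T := by nlinarith
      _ = 1 := by field_simp
      _ ≤ |x + (n : ℝ)| := habs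
  have h_sum : Summable fun n : ℤ => 𝓕 (⇑(ContinuousMap.mk F0 hF0c)) (n : ℝ) := by
    have h1 : (fun n : ℤ => 𝓕 (⇑(ContinuousMap.mk F0 hF0c)) (n : ℝ)) = fun _ => (0 : ℂ) :=
      funext fun n => by rw [ContinuousMap.coe_mk]; exact key n
    rw [h1]
    exact summable_zero
  have hper : ∀ x : ℝ, ∑' n : ℤ, F0 (x + (n : ℝ)) = 0 := by
    intro x
    have h1 := Real.tsum_eq_tsum_fourier (f := ContinuousMap.mk F0 hF0c) h_norm h_sum x
    simp only [ContinuousMap.coe_mk, key, zero_mul, tsum_zero] at h1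
    exact h1
  -- `𝓕 h` vanishes on `|y| < ν`
  have hlt : ∀ y : ℝ, |y| < ν → 𝓕 h y = 0 := by
    intro y hy
    have hp := hper (T * y)
    rw [tsum_eq_single (0 : ℤ) ?_] at hp
    · simp only [Int.cast_zero, add_zero, hF0] at hp
      rwa [mul_div_cancel_left₀ y hT.ne'] at hp
    · intro n hn
      have h1 : (1 : ℝ) ≤ |(n : ℝ)| := by
        have := Int.one_le_abs hn
        calc (1 : ℝ) ≤ ((|n| : ℤ) : ℝ) := by exact_mod_cast this
          _ = |(n : ℝ)| := by push_cast; rfl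
      simp only [hF0]
      apply hout
      have h2 : (T * y + (n : ℝ)) / T = y + (n : ℝ) / T := by field_simp
      rw [h2]
      have h3 : |(n : ℝ) / T| - |y| ≤ |y + (n : ℝ) / T| := by
        calc |(n : ℝ) / T| - |y| = |(y + (n : ℝ) / T) + (-y)| - |(-y)| := by
              rw [abs_neg]; congr 2; ring
          _ ≤ |y + (n : ℝ) / T| := by
              have := abs_add_le (y + (n : ℝ) / T) (-y)
              linarith
      have h4 : 1 / T ≤ |(n : ℝ)| / T := by gcongr
      rw [abs_div, abs_of_pos hT] at h3
      linarith
  -- `𝓕 h = 0` by continuity and density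
  have hzero : 𝓕 h = 0 := by
    have hcnt : ({ν, -ν} : Set ℝ).Countable := (Set.toFinite _).countable
    have hd : Dense ({ν, -ν} : Set ℝ)ᶜ := hcnt.dense_compl ℝ
    apply Continuous.ext_on hd hFc continuous_zero
    intro y hy
    simp only [Set.mem_compl_iff, Set.mem_insert_iff, Set.mem_singleton_iff, not_or] at hy
    rcases lt_trichotomy |y| ν with hc | hc | hc
    · exact hlt y hc
    · rcases (abs_eq hν.le).mp hc with h1 | h1
      · exact absurd h1 hy.1
      · exact absurd h1 hy.2
    · exact hout y hc
  have hh0 : h = 0 := by rw [← hinv, hzero, nyquist_aux_inv_zero]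
  rw [hh] at hh0
  exact sub_eq_zero.mp hh0
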